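/- arXiv:2502.21010 — 8 statements merged into one kernel-verified Lean document; each statement's English description precedes it below -/
import Mathlib

section
/- The function g defined by g(x) = (1/x)·log₂((1+x)/(1−x)) is strictly increasing on the open interval (0,1). -/
/-!
Dividing the series `log ((1 + x) / (1 - x)) = 2 ∑ x ^ (2k+1) / (2k+1)` by `x` gives a power series
in `x ^ 2` with positive coefficients, which is strictly increasing in `x ∈ (0, 1)`.
-/

open Real Set

lemma hasSum_log_one_add_div_one_sub_div {x : ℝ} (hx : |x| < 1) (hx0 : x ≠ 0) :
    HasSum (fun k : ℕ => 2 / (2 * k + 1) * x ^ (2 * k)) (log ((1 + x) / (1 - x)) / x) := by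
  have h1 : 0 < 1 + x := by linarith [neg_abs_le x]
  have h2 : 0 < 1 - x := by linarith [le_abs_self x]
  rw [log_div h1.ne' h2.ne']
  refine ((hasSum_log_sub_log_of_abs_lt_one hx).div_const x).congr_fun fun k => ?_
  field_simp
  ring

lemma strictMonoOn_log_one_add_div_one_sub_div :
    StrictMonoOn (fun x : ℝ => log ((1 + x) / (1 - x)) / x) (Ioo 0 1) := by
  intro x ⟨hx0, hx1⟩ y ⟨hy0, hy1⟩ hxy
  refine hasSum_lt (i := 1) (fun k => ?_) ?_
    (hasSum_log_one_add_div_one_sub_div (by rwa [abs_of_pos hx0]) hx0.ne')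
    (hasSum_log_one_add_div_one_sub_div (by rwa [abs_of_pos hy0]) hy0.ne')
  · gcongr
  · norm_num
    gcongr

/-- The function `g(x) = (1/x) * log₂((1+x)/(1-x))` is strictly increasing on `(0,1)`. -/
theorem stmt_0 :
    StrictMonoOn (fun x : ℝ => (1 / x) * Real.logb 2 ((1 + x) / (1 - x)))
      (Set.Ioo (0 : ℝ) 1) := by
  have hlog2 : 0 < log 2 := log_pos one_lt_two
  refine ((strictMono_id.div_const hlog2).comp_strictMonoOn
    strictMonoOn_log_one_add_div_one_sub_div).congr fun x _ => ?_
  simp only [Function.comp_apply, id, logb]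
  ring
end

section
/- Let s be a real number with |s| ≤ 1/2, and define G(z) = (1/4)·H(s·z+s) + (1/4)·H(s·z−s) − (1/2)·H(s·z) for z ∈ [−1,1]. Then G attains its maximum over [−1,1] at z = 1; that is, G(z) ≤ G(1) = (1/4)·H(2s) − (1/2)·H(s) for all z ∈ [−1,1]. -/
/-!
With `f t = (1+t) ln(1+t) + (1-t) ln(1-t)` (so `H = f / ln 2`) and `x = s z`, the claim is
`f(x+s) + f(x-s) - 2 f(x) ≤ f(2s) - 2 f(s)` for `|x| ≤ s ≤ 1/2`. The left side is even in `x`, and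
its derivative `L(x+s) + L(x-s) - 2 L(x)`, `L t = ln((1+t)/(1-t))`, is nonnegative for `x ≥ 0`
because `(1+x)²((1-x)² - s²) ≤ (1-x)²((1+x)² - s²)`; so it is largest at `x = ±s`.
-/

/-- `H_y(x) = (1+y+x)·log₂(1+y+x) + (1+y−x)·log₂(1+y−x)`; `H = H_0`. -/
noncomputable def Hy (y x : ℝ) : ℝ :=
  (1 + y + x) * Real.logb 2 (1 + y + x) + (1 + y - x) * Real.logb 2 (1 + y - x)

open Real Set

noncomputable def symmMulLog (t : ℝ) : ℝ :=
  (1 + t) * log (1 + t) + (1 - t) * log (1 - t)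

lemma Hy_zero_eq_symmMulLog_div (x : ℝ) : Hy 0 x = symmMulLog x / log 2 := by
  unfold Hy symmMulLog logb
  ring_nf

lemma symmMulLog_neg (t : ℝ) : symmMulLog (-t) = symmMulLog t := by
  unfold symmMulLog
  ring_nf

lemma symmMulLog_zero : symmMulLog 0 = 0 := by
  simp [symmMulLog]

@[fun_prop]
lemma continuous_symmMulLog : Continuous symmMulLog :=
  (continuous_mul_log.comp (continuous_const.add continuous_id)).add
    (continuous_mul_log.comp (continuous_const.sub continuous_id))

lemma hasDerivAt_symmMulLog {t : ℝ} (h₁ : 1 + t ≠ 0) (h₂ : 1 - t ≠ 0) :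
    HasDerivAt symmMulLog (log (1 + t) - log (1 - t)) t := by
  have hplus := (hasDerivAt_mul_log h₁).comp t ((hasDerivAt_id t).const_add 1)
  have hminus := (hasDerivAt_mul_log h₂).comp t ((hasDerivAt_id t).const_sub 1)
  exact (hplus.add hminus).congr_deriv (by ring)

lemma two_mul_log_ratio_le {y s : ℝ} (hy : 0 ≤ y) (hs : 0 ≤ s) (hys : y + s < 1) :
    2 * (log (1 + y) - log (1 - y)) ≤
      (log (1 + (y + s)) - log (1 - (y + s))) + (log (1 + (y - s)) - log (1 - (y - s))) := by
  have hprod : (1 - (y + s)) * (1 - (y - s)) * ((1 + y) * (1 + y))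
      ≤ (1 + (y + s)) * (1 + (y - s)) * ((1 - y) * (1 - y)) := by
    nlinarith [mul_nonneg hy (sq_nonneg s)]
  have hlog := log_le_log (by apply mul_pos <;> nlinarith) hprod
  rw [log_mul (by nlinarith) (by nlinarith), log_mul (by linarith) (by linarith),
    log_mul (by linarith) (by linarith), log_mul (by nlinarith) (by nlinarith),
    log_mul (by linarith) (by linarith), log_mul (by linarith) (by linarith)] at hlog
  linarith

lemma monotoneOn_symmMulLog_secondDiff {s : ℝ} (hs : s ≤ 1 / 2) :
    MonotoneOn (fun x ↦ symmMulLog (x + s) + symmMulLog (x - s) - 2 * symmMulLog x) (Icc 0 s) := by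
  refine monotoneOn_of_hasDerivWithinAt_nonneg (convex_Icc 0 s)
    (f' := fun y ↦ (log (1 + (y + s)) - log (1 - (y + s)))
      + (log (1 + (y - s)) - log (1 - (y - s))) - 2 * (log (1 + y) - log (1 - y)))
    (by fun_prop) (fun y hy ↦ ?_) (fun y hy ↦ ?_)
  all_goals
    rw [interior_Icc] at hy
    obtain ⟨hy₀, hys⟩ := hy
  · have hplus := (hasDerivAt_symmMulLog (t := y + s) (by linarith) (by linarith)).comp y
      ((hasDerivAt_id y).add_const s)
    have hminus := (hasDerivAt_symmMulLog (t := y - s) (by linarith) (by linarith)).comp y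
      ((hasDerivAt_id y).sub_const s)
    have hmid := (hasDerivAt_symmMulLog (t := y) (by linarith) (by linarith)).const_mul 2
    exact (((hplus.add hminus).sub hmid).congr_deriv (by simp)).hasDerivWithinAt
  · exact sub_nonneg.mpr (two_mul_log_ratio_le hy₀.le (by linarith) (by linarith))

lemma symmMulLog_secondDiff_le {s x : ℝ} (hs : |s| ≤ 1 / 2) (hx : |x| ≤ |s|) :
    symmMulLog (x + s) + symmMulLog (x - s) - 2 * symmMulLog x
      ≤ symmMulLog (2 * s) - 2 * symmMulLog s := by
  wlog hs₀ : 0 ≤ s generalizing s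
  · have h := this (s := -s) (by rwa [abs_neg]) (by rwa [abs_neg]) (by linarith)
    rwa [← sub_eq_add_neg, sub_neg_eq_add, add_comm (symmMulLog (x - s)), mul_neg,
      symmMulLog_neg, symmMulLog_neg] at h
  wlog hx₀ : 0 ≤ x generalizing x
  · have h := this (x := -x) (by rwa [abs_neg]) (by linarith)
    rwa [show -x + s = -(x - s) by ring, show -x - s = -(x + s) by ring, symmMulLog_neg,
      symmMulLog_neg, symmMulLog_neg, add_comm (symmMulLog (x - s))] at h
  rw [abs_of_nonneg hs₀] at hs hx
  rw [abs_of_nonneg hx₀] at hx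
  have h := monotoneOn_symmMulLog_secondDiff hs ⟨hx₀, hx⟩ ⟨hs₀, le_rfl⟩ hx
  simpa [← two_mul, symmMulLog_zero] using h

lemma Hy_zero_secondDiff_le {s x : ℝ} (hs : |s| ≤ 1 / 2) (hx : |x| ≤ |s|) :
    Hy 0 (x + s) + Hy 0 (x - s) - 2 * Hy 0 x ≤ Hy 0 (2 * s) - 2 * Hy 0 s := by
  simp only [Hy_zero_eq_symmMulLog_div]
  calc _ = (symmMulLog (x + s) + symmMulLog (x - s) - 2 * symmMulLog x) / log 2 := by ring
    _ ≤ (symmMulLog (2 * s) - 2 * symmMulLog s) / log 2 :=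
      div_le_div_of_nonneg_right (symmMulLog_secondDiff_le hs hx) (by positivity)
    _ = _ := by ring

/-- For `|s| ≤ 1/2`, `G(z) = (1/4)H(sz+s) + (1/4)H(sz−s) − (1/2)H(sz)` attains its maximum
over `[-1,1]` at `z = 1`, and `G(1) = (1/4)H(2s) − (1/2)H(s)`. -/
theorem stmt_2 (s : ℝ) (hs : |s| ≤ 1 / 2) (G : ℝ → ℝ)
    (hG : ∀ z, G z =
      (1 / 4) * Hy 0 (s * z + s) + (1 / 4) * Hy 0 (s * z - s) - (1 / 2) * Hy 0 (s * z)) :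
    (∀ z ∈ Set.Icc (-1 : ℝ) 1, G z ≤ G 1) ∧
      G 1 = (1 / 4) * Hy 0 (2 * s) - (1 / 2) * Hy 0 s := by
  have hG1 : G 1 = (1 / 4) * Hy 0 (2 * s) - (1 / 2) * Hy 0 s := by
    rw [hG 1, mul_one, sub_self, show s + s = 2 * s by ring,
      Hy_zero_eq_symmMulLog_div 0, symmMulLog_zero]
    ring
  refine ⟨fun z hz ↦ ?_, hG1⟩
  have hsz : |s * z| ≤ |s| := by
    rw [abs_mul]
    exact mul_le_of_le_one_right (abs_nonneg s) (abs_le.mpr hz)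
  rw [hG z, hG1]
  linarith [Hy_zero_secondDiff_le hs hsz]
end

section
/- Let s, c, c₃, z be real numbers with c₃ ≤ 0, 0 ≤ z ≤ 1, 1+s+s·z > 0 and 1+s−s·z > 0. Define K₊ = √((s+c₃z)² + c²(1−z²)), K₋ = √((s−c₃z)² + c²(1−z²)), B₊ = K₊/(1+s+s·z) and B₋ = K₋/(1+s−s·z). Then s·(B₊² − B₋²) ≤ 0. -/
/-!
Write `Q = s² + c₃²z² + c²(1 − z²) ≥ 0`, so that `K₊² = Q + 2sc₃z` and `K₋² = Q − 2sc₃z`.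
Clearing the denominators, `B₊² − B₋²` has the sign of
`K₊²(1+s−sz)² − K₋²(1+s+sz)² = −4sz((1+s)Q − c₃((1+s)² + s²z²))`,
and `1 + s > 0` (the mean of the two positive denominators) together with `c₃ ≤ 0` makes the last
factor nonnegative; multiplying by `s` leaves `−4s²z` times it.
-/

lemma cross_diff_eq {R : Type*} [CommRing R] (s c c₃ z : R) :
    ((s + c₃ * z) ^ 2 + c ^ 2 * (1 - z ^ 2)) * (1 + s - s * z) ^ 2
      - ((s - c₃ * z) ^ 2 + c ^ 2 * (1 - z ^ 2)) * (1 + s + s * z) ^ 2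
      = -(4 * s * z) * ((1 + s) * (s ^ 2 + (c₃ * z) ^ 2 + c ^ 2 * (1 - z ^ 2))
          - c₃ * ((1 + s) ^ 2 + (s * z) ^ 2)) := by
  ring

lemma mul_cross_diff_nonpos {s c c₃ z : ℝ} (h3 : c₃ ≤ 0) (hz0 : 0 ≤ z) (hz1 : z ≤ 1)
    (hs : 0 ≤ 1 + s) :
    s * (((s + c₃ * z) ^ 2 + c ^ 2 * (1 - z ^ 2)) * (1 + s - s * z) ^ 2
      - ((s - c₃ * z) ^ 2 + c ^ 2 * (1 - z ^ 2)) * (1 + s + s * z) ^ 2) ≤ 0 := by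
  have hz2 : 0 ≤ 1 - z ^ 2 := by nlinarith
  have hfactor : 0 ≤ (1 + s) * (s ^ 2 + (c₃ * z) ^ 2 + c ^ 2 * (1 - z ^ 2))
      - c₃ * ((1 + s) ^ 2 + (s * z) ^ 2) := by
    have : 0 ≤ -c₃ * ((1 + s) ^ 2 + (s * z) ^ 2) := mul_nonneg (neg_nonneg.2 h3) (by positivity)
    have : 0 ≤ (1 + s) * (s ^ 2 + (c₃ * z) ^ 2 + c ^ 2 * (1 - z ^ 2)) := by positivity
    linarith
  rw [cross_diff_eq]
  nlinarith [mul_nonneg (mul_nonneg (sq_nonneg s) hz0) hfactor]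

lemma mul_sub_div_sq_nonpos {s x y p m : ℝ} (hp : p ≠ 0) (hm : m ≠ 0)
    (h : s * (x * m ^ 2 - p ^ 2 * y) ≤ 0) : s * (x / p ^ 2 - y / m ^ 2) ≤ 0 := by
  rw [div_sub_div _ _ (pow_ne_zero 2 hp) (pow_ne_zero 2 hm), ← mul_div_assoc]
  exact div_nonpos_of_nonpos_of_nonneg h (by positivity)

lemma sq_sqrt_div {a d : ℝ} (ha : 0 ≤ a) : (Real.sqrt a / d) ^ 2 = a / d ^ 2 := by
  rw [div_pow, Real.sq_sqrt ha]

/-- With `c₃ ≤ 0`, `0 ≤ z ≤ 1`, `1+s+sz > 0`, `1+s−sz > 0`,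
`K₊ = √((s+c₃z)²+c²(1−z²))`, `K₋ = √((s−c₃z)²+c²(1−z²))`,
`B₊ = K₊/(1+s+sz)`, `B₋ = K₋/(1+s−sz)`, one has `s(B₊² − B₋²) ≤ 0`. -/
theorem stmt_5 (s c c₃ z : ℝ) (h3 : c₃ ≤ 0) (hz0 : 0 ≤ z) (hz1 : z ≤ 1)
    (hp : 1 + s + s * z > 0) (hm : 1 + s - s * z > 0) :
    s * ((Real.sqrt ((s + c₃ * z) ^ 2 + c ^ 2 * (1 - z ^ 2)) / (1 + s + s * z)) ^ 2
       - (Real.sqrt ((s - c₃ * z) ^ 2 + c ^ 2 * (1 - z ^ 2)) / (1 + s - s * z)) ^ 2) ≤ 0 := by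
  have hz2 : 0 ≤ 1 - z ^ 2 := by nlinarith
  rw [sq_sqrt_div (by positivity), sq_sqrt_div (by positivity)]
  refine mul_sub_div_sq_nonpos hp.ne' hm.ne' ?_
  rw [mul_comm ((1 + s + s * z) ^ 2)]
  exact mul_cross_diff_nonpos h3 hz0 hz1 (by linarith)
end

section
/- Let s, c₁, c₂, c₃ be real numbers, set c = max(|c₁|,|c₂|), and assume c₃ ≤ 0, c² ≤ c₃² and 3|s| + |c₃| ≤ 1. Define ψ(z) = c²(1−z²) + c₃²z² and F(z₀,z₁) = (1/8)·[ H_{s+s z₀}(√(s²+2sc₃z₀+ψ(z₀))) + H_{s−s z₀}(√(s²−2sc₃z₀+ψ(z₀))) + H_{−s+s z₁}(√(s²+2sc₃z₁+ψ(z₁))) + H_{−s−s z₁}(√(s²−2sc₃z₁+ψ(z₁))) − 2·H_s(s z₀) − 2·H_{−s}(s z₁) ]. Then F is monotone nondecreasing in each of its two variables on [0,1]×[0,1]; in particular F(z₀,z₁) ≤ F(1,1) for all z₀, z₁ ∈ [0,1]. -/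
/-- `ψ(z) = c²(1−z²) + c₃²z²`. -/
noncomputable def psi (c c₃ z : ℝ) : ℝ := c ^ 2 * (1 - z ^ 2) + c₃ ^ 2 * z ^ 2

/-- The function `F(z₀,z₁)` from the three-qubit optimization. -/
noncomputable def F6 (s c c₃ z₀ z₁ : ℝ) : ℝ :=
  (1 / 8) *
    (Hy (s + s * z₀) (Real.sqrt (s ^ 2 + 2 * s * c₃ * z₀ + psi c c₃ z₀))
      + Hy (s - s * z₀) (Real.sqrt (s ^ 2 - 2 * s * c₃ * z₀ + psi c c₃ z₀))
      + Hy (-s + s * z₁) (Real.sqrt (s ^ 2 + 2 * s * c₃ * z₁ + psi c c₃ z₁))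
      + Hy (-s - s * z₁) (Real.sqrt (s ^ 2 - 2 * s * c₃ * z₁ + psi c c₃ z₁))
      - 2 * Hy s (s * z₀) - 2 * Hy (-s) (s * z₁))

open Real Set Filter Topology

noncomputable def entGap (u r : ℝ) : ℝ := 2 * negMulLog u - negMulLog (u + r) - negMulLog (u - r)

noncomputable def logSlope (x : ℝ) : ℝ := (log (1 + x) - log (1 - x)) / x

lemma logSlope_le_logSlope {x y : ℝ} (hx : 0 < x) (hxy : x ≤ y) (hy : y < 1) :
    logSlope x ≤ logSlope y := by
  have hsum {t : ℝ} (ht : 0 < t) (ht1 : t < 1) :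
      HasSum (fun k : ℕ => 2 * (1 / (2 * k + 1)) * t ^ (2 * k)) (logSlope t) := by
    have hterm : (fun k : ℕ => 2 * (1 / (2 * k + 1)) * t ^ (2 * k)) =
        fun k : ℕ => 2 * (1 / (2 * k + 1)) * t ^ (2 * k + 1) / t := by
      funext k
      rw [pow_succ]
      field_simp
    rw [hterm]
    exact (hasSum_log_sub_log_of_abs_lt_one (abs_lt.2 ⟨by linarith, ht1⟩)).div_const t
  refine hasSum_le (fun k => ?_) (hsum hx (hxy.trans_lt hy)) (hsum (hx.trans_le hxy) hy)
  gcongr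

lemma logSlope_nonneg {x : ℝ} (hx : 0 < x) (hx1 : x < 1) : 0 ≤ logSlope x :=
  div_nonneg (sub_nonneg.2 (log_le_log (by linarith) (by linarith))) hx.le

lemma log_one_add_add_log_one_sub_le {x y : ℝ} (hx : 0 ≤ x) (hxy : x ≤ y) (hy : y < 1) :
    log (1 + y) + log (1 - y) ≤ log (1 + x) + log (1 - x) := by
  rw [← log_mul (by linarith) (by linarith), ← log_mul (by linarith) (by linarith)]
  exact log_le_log (by nlinarith) (by nlinarith)

lemma HasDerivAt.entGap_sqrt {f q : ℝ → ℝ} {f' q' z : ℝ} (hf : HasDerivAt f f' z)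
    (hq : HasDerivAt q q' z) (hq0 : 0 < q z) (hqf : √(q z) < f z) :
    HasDerivAt (fun z => entGap (f z) √(q z))
      ((Real.log (1 + √(q z) / f z) + Real.log (1 - √(q z) / f z)) * f'
        + logSlope (√(q z) / f z) * (q' / 2) / f z) z := by
  have hr : 0 < √(q z) := sqrt_pos.2 hq0
  have hf0 : 0 < f z := hr.trans hqf
  have hp : 0 < f z + √(q z) := by linarith
  have hm : 0 < f z - √(q z) := by linarith
  have hr' := hq.sqrt hq0.ne'
  have h := (((hasDerivAt_negMulLog hf0.ne').comp z hf).const_mul 2).sub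
    ((hasDerivAt_negMulLog hp.ne').comp z (hf.add hr')) |>.sub
    ((hasDerivAt_negMulLog hm.ne').comp z (hf.sub hr'))
  refine h.congr_deriv ?_
  have hlog {a : ℝ} (ha : 0 < f z + a) :
      Real.log (f z + a) = Real.log (f z) + Real.log (1 + a / f z) := by
    have : 0 < 1 + a / f z := by rw [one_add_div hf0.ne']; exact div_pos ha hf0
    rw [← Real.log_mul hf0.ne' this.ne']
    congr 1
    field_simp
  rw [sub_eq_add_neg (f z), hlog hp, hlog (by linarith), logSlope, neg_div,
    ← sub_eq_add_neg]
  field_simp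
  ring

lemma slope_combination_nonneg {a e d u v x y : ℝ} (ha : 0 ≤ a) (he : 0 ≤ e) (hd : 0 ≤ d)
    (hx : 0 < x) (hxy : x ≤ y) (hy : y < 1) (hv : 0 < v) (hvu : v ≤ u) :
    0 ≤ a * (log (1 + x) + log (1 - x) - (log (1 + y) + log (1 - y)))
      + e * (logSlope y / v - logSlope x / u) + d * (logSlope x / u + logSlope y / v) := by
  have hy0 : 0 < y := hx.trans_le hxy
  have hslope : logSlope x / u ≤ logSlope y / v :=
    div_le_div₀ (logSlope_nonneg hy0 hy) (logSlope_le_logSlope hx hxy hy) hv hvu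
  have hslope_x : 0 ≤ logSlope x / u :=
    div_nonneg (logSlope_nonneg hx (hxy.trans_lt hy)) (hv.le.trans hvu)
  have hslope_y : 0 ≤ logSlope y / v := div_nonneg (logSlope_nonneg hy0 hy) hv.le
  have hlog := log_one_add_add_log_one_sub_le hx.le hxy hy
  nlinarith [mul_nonneg ha (sub_nonneg.2 hlog), mul_nonneg he (sub_nonneg.2 hslope),
    mul_nonneg hd (add_nonneg hslope_x hslope_y)]

noncomputable def radicand (s c c₃ z : ℝ) : ℝ := s ^ 2 + 2 * s * c₃ * z + psi c c₃ z

noncomputable def F6Summand (s c c₃ z : ℝ) : ℝ :=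
  entGap (1 + s + s * z) √(radicand s c c₃ z) + entGap (1 + s - s * z) √(radicand (-s) c c₃ z)

lemma F6_eq (s c c₃ z₀ z₁ : ℝ) :
    F6 s c c₃ z₀ z₁ = (F6Summand s c c₃ z₀ + F6Summand (-s) c c₃ z₁) / (8 * log 2) := by
  simp only [F6, F6Summand, radicand, Hy, entGap, negMulLog, logb]
  ring_nf

lemma radicand_pos {s c c₃ z : ℝ} (hc : c ≠ 0) (hz : z ^ 2 < 1) : 0 < radicand s c c₃ z := by
  have : 0 < c ^ 2 * (1 - z ^ 2) := mul_pos (by positivity) (by linarith)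
  simp only [radicand, psi]
  nlinarith [sq_nonneg (s + c₃ * z)]

lemma sqrt_radicand_le {s c c₃ z : ℝ} (h2 : c ^ 2 ≤ c₃ ^ 2) (hz : |z| ≤ 1) :
    √(radicand s c c₃ z) ≤ |s| + |c₃| := by
  have hz2 : z ^ 2 ≤ 1 := by rw [← sq_abs]; nlinarith [abs_nonneg z]
  have hscz : s * c₃ * z ≤ |s| * |c₃| := by
    calc s * c₃ * z ≤ |s * c₃ * z| := le_abs_self _
      _ = |s| * |c₃| * |z| := by rw [abs_mul, abs_mul]
      _ ≤ |s| * |c₃| := mul_le_of_le_one_right (by positivity) hz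
  refine sqrt_le_iff.2 ⟨by positivity, ?_⟩
  simp only [radicand, psi]
  nlinarith [mul_le_mul_of_nonneg_right h2 (by linarith : 0 ≤ 1 - z ^ 2), sq_abs s, sq_abs c₃]

lemma hasDerivAt_radicand (s c c₃ z : ℝ) :
    HasDerivAt (radicand s c c₃) (2 * (s * c₃ + (c₃ ^ 2 - c ^ 2) * z)) z := by
  have h := ((hasDerivAt_id z).const_mul (2 * s * c₃)).const_add (s ^ 2) |>.add
    ((((hasDerivAt_pow 2 z).const_sub 1).const_mul (c ^ 2)).add
      ((hasDerivAt_pow 2 z).const_mul (c₃ ^ 2)))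
  exact h.congr_deriv (by simp; ring)

lemma radicand_le_radicand_neg {s c c₃ z : ℝ} (hs : 0 ≤ s) (h1 : c₃ ≤ 0) (hz : 0 ≤ z) :
    radicand s c c₃ z ≤ radicand (-s) c c₃ z := by
  simp only [radicand]
  nlinarith [mul_nonneg (mul_nonneg hs (neg_nonneg.2 h1)) hz]

lemma sqrt_radicand_lt {s c c₃ z : ℝ} (h2 : c ^ 2 ≤ c₃ ^ 2) (h3 : 3 * |s| + |c₃| < 1)
    (hz : z ∈ Icc 0 1) :
    √(radicand s c c₃ z) < 1 + s + s * z ∧ √(radicand (-s) c c₃ z) < 1 + s - s * z := by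
  obtain ⟨hz0, hz1⟩ := hz
  have hzabs : |z| ≤ 1 := abs_le.2 ⟨by linarith, hz1⟩
  have hR := sqrt_radicand_le (s := s) h2 hzabs
  have hR' := sqrt_radicand_le (s := -s) h2 hzabs
  rw [abs_neg] at hR'
  have := neg_abs_le s
  constructor
  · nlinarith [mul_nonneg (abs_nonneg s) (by linarith : (0 : ℝ) ≤ 1 - z)]
  · nlinarith [mul_nonneg (abs_nonneg s) (by linarith : (0 : ℝ) ≤ 1 + z)]

lemma exists_hasDerivAt_F6Summand_nonneg {s c c₃ z : ℝ} (hc : c ≠ 0) (h1 : c₃ ≤ 0)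
    (h2 : c ^ 2 ≤ c₃ ^ 2) (h3 : 3 * |s| + |c₃| < 1) (hz : z ∈ Ioo 0 1) :
    ∃ D, HasDerivAt (F6Summand s c c₃) D z ∧ 0 ≤ D := by
  obtain ⟨hz0, hz1⟩ := hz
  have hQp : 0 < radicand s c c₃ z := radicand_pos hc (by nlinarith)
  have hQm : 0 < radicand (-s) c c₃ z := radicand_pos hc (by nlinarith)
  obtain ⟨hRp, hRm⟩ := sqrt_radicand_lt h2 h3 ⟨hz0.le, hz1.le⟩
  have hlinU : HasDerivAt (fun z => 1 + s + s * z) s z := by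
    simpa using ((hasDerivAt_id z).const_mul s).const_add (1 + s)
  have hlinV : HasDerivAt (fun z => 1 + s - s * z) (-s) z := by
    simpa using ((hasDerivAt_id z).const_mul s).const_sub (1 + s)
  refine ⟨_, (hlinU.entGap_sqrt (hasDerivAt_radicand s c c₃ z) hQp hRp).add
    (hlinV.entGap_sqrt (hasDerivAt_radicand (-s) c c₃ z) hQm hRm), ?_⟩
  have hd : 0 ≤ (c₃ ^ 2 - c ^ 2) * z := mul_nonneg (by linarith) hz0.le
  have hUpos : 0 < 1 + s + s * z := (sqrt_nonneg _).trans_lt hRp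
  have hVpos : 0 < 1 + s - s * z := (sqrt_nonneg _).trans_lt hRm
  have hxp : 0 < √(radicand s c c₃ z) / (1 + s + s * z) := div_pos (sqrt_pos.2 hQp) hUpos
  have hxm : 0 < √(radicand (-s) c c₃ z) / (1 + s - s * z) := div_pos (sqrt_pos.2 hQm) hVpos
  have hxp1 := (div_lt_one hUpos).2 hRp
  have hxm1 := (div_lt_one hVpos).2 hRm
  -- for `s ≤ 0` the pairs `(U, R₊)` and `(V, R₋)` exchange their roles
  rcases le_total 0 s with hs0 | hs0
  · have hxy : √(radicand s c c₃ z) / (1 + s + s * z) ≤ √(radicand (-s) c c₃ z) / (1 + s - s * z) :=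
      div_le_div₀ (sqrt_nonneg _) (sqrt_le_sqrt (radicand_le_radicand_neg hs0 h1 hz0.le)) hVpos
        (by nlinarith)
    have := slope_combination_nonneg hs0 (by nlinarith : 0 ≤ -(s * c₃)) hd hxp hxy hxm1 hVpos
      (u := 1 + s + s * z) (by nlinarith)
    linear_combination this
  · have hQle := radicand_le_radicand_neg (c := c) (z := z) (neg_nonneg.2 hs0) h1 hz0.le
    rw [neg_neg] at hQle
    have hxy : √(radicand (-s) c c₃ z) / (1 + s - s * z) ≤ √(radicand s c c₃ z) / (1 + s + s * z) :=
      div_le_div₀ (sqrt_nonneg _) (sqrt_le_sqrt hQle) hUpos (by nlinarith)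
    have := slope_combination_nonneg (neg_nonneg.2 hs0) (by nlinarith : 0 ≤ s * c₃) hd hxm hxy
      hxp1 hUpos (u := 1 + s - s * z) (by nlinarith)
    linear_combination this

@[fun_prop]
lemma Continuous.F6Summand {α : Type*} [TopologicalSpace α] {s c c₃ z : α → ℝ}
    (hs : Continuous s) (hc : Continuous c) (hc₃ : Continuous c₃) (hz : Continuous z) :
    Continuous fun t => _root_.F6Summand (s t) (c t) (c₃ t) (z t) := by
  unfold _root_.F6Summand entGap radicand psi
  fun_prop

lemma F6Summand_monotoneOn_of_lt {s c c₃ : ℝ} (hc : c ≠ 0) (h1 : c₃ ≤ 0) (h2 : c ^ 2 ≤ c₃ ^ 2)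
    (h3 : 3 * |s| + |c₃| < 1) : MonotoneOn (F6Summand s c c₃) (Icc 0 1) := by
  have hderiv (z : ℝ) (hz : z ∈ interior (Icc 0 1)) :=
    exists_hasDerivAt_F6Summand_nonneg hc h1 h2 h3 (by rwa [interior_Icc] at hz)
  refine monotoneOn_of_deriv_nonneg (convex_Icc 0 1) (by fun_prop) (fun z hz => ?_) (fun z hz => ?_)
  · obtain ⟨D, hD, -⟩ := hderiv z hz
    exact hD.differentiableAt.differentiableWithinAt
  · obtain ⟨D, hD, hD0⟩ := hderiv z hz
    rwa [hD.deriv]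

lemma F6Summand_monotoneOn {s c c₃ : ℝ} (h1 : c₃ ≤ 0) (h2 : c ^ 2 ≤ c₃ ^ 2)
    (h3 : 3 * |s| + |c₃| ≤ 1) : MonotoneOn (F6Summand s c c₃) (Icc 0 1) := by
  have hc : |c| ≤ -c₃ := by rw [← abs_of_nonpos h1]; exact sq_le_sq.1 h2
  -- `ψ` only sees `c²`, so `|c|` may stand for `c` at `t = 0`.
  have happrox (t : ℝ) (ht : t ∈ Ioo 0 1) :
      MonotoneOn (F6Summand ((1 - t) * s) ((1 - t) * |c| + t / 2) ((1 - t) * c₃ - t / 2))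
        (Icc 0 1) := by
    obtain ⟨ht0, ht1⟩ := ht
    have hct : 0 < (1 - t) * |c| + t / 2 := by
      have := mul_nonneg (sub_nonneg.2 ht1.le) (abs_nonneg c); linarith
    have hc₃t : (1 - t) * c₃ - t / 2 ≤ 0 := by
      have := mul_nonpos_of_nonneg_of_nonpos (sub_nonneg.2 ht1.le) h1; linarith
    refine F6Summand_monotoneOn_of_lt hct.ne' hc₃t ?_ ?_
    · rw [← neg_sq ((1 - t) * c₃ - t / 2)]
      refine pow_le_pow_left₀ hct.le ?_ 2
      nlinarith
    · rw [abs_mul, abs_of_pos (sub_pos.2 ht1), abs_of_nonpos hc₃t]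
      rw [abs_of_nonpos h1] at h3
      nlinarith
  have hlim (z : ℝ) : Tendsto
      (fun t => F6Summand ((1 - t) * s) ((1 - t) * |c| + t / 2) ((1 - t) * c₃ - t / 2) z)
      (𝓝[>] 0) (𝓝 (F6Summand s c c₃ z)) := by
    have hcont : Continuous
        (fun t => F6Summand ((1 - t) * s) ((1 - t) * |c| + t / 2) ((1 - t) * c₃ - t / 2) z) := by
      fun_prop
    convert hcont.tendsto 0 |>.mono_left nhdsWithin_le_nhds using 2
    simp [F6Summand, radicand, psi]
  intro x hx y hy hxy
  refine le_of_tendsto_of_tendsto (hlim x) (hlim y) ?_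
  filter_upwards [Ioo_mem_nhdsGT zero_lt_one] with t ht using happrox t ht hx hy hxy

theorem stmt_6_general (s c₃ c : ℝ)
    (h1 : c₃ ≤ 0) (h2 : c ^ 2 ≤ c₃ ^ 2) (h3 : 3 * |s| + |c₃| ≤ 1) :
    (∀ z₁ ∈ Set.Icc (0 : ℝ) 1, MonotoneOn (fun z₀ => F6 s c c₃ z₀ z₁) (Set.Icc 0 1)) ∧
    (∀ z₀ ∈ Set.Icc (0 : ℝ) 1, MonotoneOn (fun z₁ => F6 s c c₃ z₀ z₁) (Set.Icc 0 1)) ∧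
    (∀ z₀ ∈ Set.Icc (0 : ℝ) 1, ∀ z₁ ∈ Set.Icc (0 : ℝ) 1,
      F6 s c c₃ z₀ z₁ ≤ F6 s c c₃ 1 1) := by
  have hmono₀ := F6Summand_monotoneOn h1 h2 h3
  have hmono₁ := F6Summand_monotoneOn (s := -s) h1 h2 (by rwa [abs_neg])
  have hF₀ (z₁ : ℝ) : MonotoneOn (fun z₀ => F6 s c c₃ z₀ z₁) (Icc 0 1) := fun x hx y hy hxy => by
    simp only [F6_eq]
    gcongr
    exact hmono₀ hx hy hxy
  have hF₁ (z₀ : ℝ) : MonotoneOn (fun z₁ => F6 s c c₃ z₀ z₁) (Icc 0 1) := fun x hx y hy hxy => by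
    simp only [F6_eq]
    gcongr
    exact hmono₁ hx hy hxy
  have h1mem : (1 : ℝ) ∈ Icc (0 : ℝ) 1 := right_mem_Icc.2 zero_le_one
  refine ⟨fun z₁ _ => hF₀ z₁, fun z₀ _ => hF₁ z₀, fun z₀ hz₀ z₁ hz₁ => ?_⟩
  calc F6 s c c₃ z₀ z₁ ≤ F6 s c c₃ 1 z₁ := hF₀ z₁ hz₀ h1mem hz₀.2
    _ ≤ F6 s c c₃ 1 1 := hF₁ 1 hz₁ h1mem hz₁.2

/-- With `c = max(|c₁|,|c₂|)`, `c₃ ≤ 0`, `c² ≤ c₃²` and `3|s|+|c₃| ≤ 1`, the function `F`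
is monotone nondecreasing in each variable on `[0,1]²`; in particular `F(z₀,z₁) ≤ F(1,1)`. -/
theorem stmt_6 (s c₁ c₂ c₃ c : ℝ) (hc : c = max |c₁| |c₂|)
    (h1 : c₃ ≤ 0) (h2 : c ^ 2 ≤ c₃ ^ 2) (h3 : 3 * |s| + |c₃| ≤ 1) :
    (∀ z₁ ∈ Set.Icc (0 : ℝ) 1, MonotoneOn (fun z₀ => F6 s c c₃ z₀ z₁) (Set.Icc 0 1)) ∧
    (∀ z₀ ∈ Set.Icc (0 : ℝ) 1, MonotoneOn (fun z₁ => F6 s c c₃ z₀ z₁) (Set.Icc 0 1)) ∧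
    (∀ z₀ ∈ Set.Icc (0 : ℝ) 1, ∀ z₁ ∈ Set.Icc (0 : ℝ) 1,
      F6 s c c₃ z₀ z₁ ≤ F6 s c c₃ 1 1) :=
  stmt_6_general s c₃ c h1 h2 h3
end

section
/- Let c₁, c₂, c₃ be real numbers and let ρ = (1/8)·(I₈ + c₁·σ₁⊗σ₁⊗σ₁ + c₂·σ₂⊗σ₂⊗σ₂ + c₃·σ₃⊗σ₃⊗σ₃) as an 8×8 complex matrix. Then ρ is Hermitian and its characteristic polynomial is (X − (1+r)/8)⁴·(X − (1−r)/8)⁴, where r = √(c₁²+c₂²+c₃²); equivalently, the eigenvalues of ρ are (1+r)/8 and (1−r)/8, each with multiplicity 4. -/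
/-!
Each `σᵢ ⊗ σᵢ ⊗ σᵢ` sends a bit string to a multiple of itself (`i = 3`) or of its complement
(`i = 1, 2`), so the four planes spanned by complementary pairs of bit strings are invariant
under `ρ`. Permuting the basis accordingly makes `ρ` block diagonal with four `2 × 2` blocks
`(1/8)(I + a σ₁ + b σ₂ + c σ₃)`, where `(a, b, c) = (c₁, ∓c₂, ±c₃)`. Such a block is Hermitian,
has trace `1/4` and determinant `(1 - r²)/64`, hence eigenvalues `(1 ± r)/8`.
-/

open Kronecker Polynomial

/-- Pauli matrix σ₁. -/
def pauli1 : Matrix (Fin 2) (Fin 2) ℂ := !![0, 1; 1, 0]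
/-- Pauli matrix σ₂. -/
def pauli2 : Matrix (Fin 2) (Fin 2) ℂ := !![0, -Complex.I; Complex.I, 0]
/-- Pauli matrix σ₃. -/
def pauli3 : Matrix (Fin 2) (Fin 2) ℂ := !![1, 0; 0, -1]

open Matrix

lemma Matrix.charmatrix_blockDiagonal {m o R : Type*} [Fintype m] [DecidableEq m] [Fintype o]
    [DecidableEq o] [CommRing R] (B : o → Matrix m m R) :
    charmatrix (blockDiagonal B) = blockDiagonal fun k => charmatrix (B k) := by
  ext ⟨i, k⟩ ⟨j, k'⟩ : 1
  by_cases hk : k = k'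
  · subst hk
    by_cases hij : i = j <;> simp [hij]
  · simp [hk, blockDiagonal_apply_ne]

lemma Matrix.charpoly_blockDiagonal {m o R : Type*} [Fintype m] [DecidableEq m] [Fintype o]
    [DecidableEq o] [CommRing R] (B : o → Matrix m m R) :
    (blockDiagonal B).charpoly = ∏ k, (B k).charpoly := by
  rw [charpoly, charmatrix_blockDiagonal, det_blockDiagonal]
  rfl

lemma isHermitian_pauli1 : pauli1.IsHermitian := by
  ext i j; fin_cases i <;> fin_cases j <;> simp [pauli1]

lemma isHermitian_pauli2 : pauli2.IsHermitian := by
  ext i j; fin_cases i <;> fin_cases j <;> simp [pauli2]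

lemma isHermitian_pauli3 : pauli3.IsHermitian := by
  ext i j; fin_cases i <;> fin_cases j <;> simp [pauli3]

def blochMatrix (t a b c : ℂ) : Matrix (Fin 2) (Fin 2) ℂ :=
  t • (1 + a • pauli1 + b • pauli2 + c • pauli3)

lemma isHermitian_blochMatrix (t a b c : ℝ) : (blochMatrix t a b c).IsHermitian :=
  (((isHermitian_one.add (isHermitian_pauli1.smul (Complex.conj_ofReal a))).add
    (isHermitian_pauli2.smul (Complex.conj_ofReal b))).add
      (isHermitian_pauli3.smul (Complex.conj_ofReal c))).smul (Complex.conj_ofReal t)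

lemma charpoly_blochMatrix (t a b c r : ℂ) (hr : r ^ 2 = a ^ 2 + b ^ 2 + c ^ 2) :
    (blochMatrix t a b c).charpoly = (X - C (t * (1 + r))) * (X - C (t * (1 - r))) := by
  have htrace : (blochMatrix t a b c).trace = t * (1 + r) + t * (1 - r) := by
    simp [blochMatrix, pauli1, pauli2, pauli3, trace_fin_two]; ring
  have hdet : (blochMatrix t a b c).det = t * (1 + r) * (t * (1 - r)) := by
    simp [blochMatrix, pauli1, pauli2, pauli3, det_fin_two]
    linear_combination (t ^ 2) * hr + t ^ 2 * b ^ 2 * Complex.I_sq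
  rw [charpoly_fin_two, htrace, hdet]
  simp only [map_add, map_mul]
  ring

noncomputable def pauliCubeState (c₁ c₂ c₃ : ℝ) :
    Matrix (Fin 2 × Fin 2 × Fin 2) (Fin 2 × Fin 2 × Fin 2) ℂ :=
  (1 / 8 : ℂ) • (1 + (c₁ : ℂ) • (pauli1 ⊗ₖ (pauli1 ⊗ₖ pauli1))
    + (c₂ : ℂ) • (pauli2 ⊗ₖ (pauli2 ⊗ₖ pauli2))
    + (c₃ : ℂ) • (pauli3 ⊗ₖ (pauli3 ⊗ₖ pauli3)))

/-- A bit string `x` and its complement `x + (1, 1, 1)` go to the same block `(x₂ + x₁, x₃ + x₁)`,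
at positions `x₁` and `x₁ + 1`. -/
def complementPairEquiv : Fin 2 × Fin 2 × Fin 2 ≃ Fin 2 × (Fin 2 × Fin 2) where
  toFun x := (x.1, x.2.1 + x.1, x.2.2 + x.1)
  invFun y := (y.1, y.2.1 + y.1, y.2.2 + y.1)
  left_inv := by decide
  right_inv := by decide

def paritySign (o : Fin 2 × Fin 2) : ℝ := if o.1 = o.2 then 1 else -1

lemma paritySign_sq (o : Fin 2 × Fin 2) : paritySign o ^ 2 = 1 := by
  unfold paritySign; split_ifs <;> norm_num

noncomputable def pauliCubeBlock (c₁ c₂ c₃ : ℝ) (o : Fin 2 × Fin 2) : Matrix (Fin 2) (Fin 2) ℂ :=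
  blochMatrix ((1 / 8 : ℝ) : ℂ) c₁ ((-(paritySign o * c₂) : ℝ) : ℂ) ((paritySign o * c₃ : ℝ) : ℂ)

lemma reindex_pauliCubeState (c₁ c₂ c₃ : ℝ) :
    reindex complementPairEquiv complementPairEquiv (pauliCubeState c₁ c₂ c₃) =
      blockDiagonal (pauliCubeBlock c₁ c₂ c₃) := by
  ext ⟨a, o⟩ ⟨b, o'⟩ : 1
  fin_cases a <;> fin_cases b <;> fin_cases o <;> fin_cases o' <;>
    simp [pauliCubeState, complementPairEquiv, pauliCubeBlock, blochMatrix, paritySign, pauli1,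
      pauli2, pauli3, one_apply, blockDiagonal_apply, Prod.ext_iff] <;> ring

lemma isHermitian_pauliCubeState (c₁ c₂ c₃ : ℝ) : (pauliCubeState c₁ c₂ c₃).IsHermitian := by
  rw [← isHermitian_reindex_iff complementPairEquiv, reindex_pauliCubeState,
    isHermitian_blockDiagonal_iff]
  exact fun o => isHermitian_blochMatrix _ _ _ _

lemma charpoly_pauliCubeBlock (c₁ c₂ c₃ : ℝ) (o : Fin 2 × Fin 2) :
    (pauliCubeBlock c₁ c₂ c₃ o).charpoly =
      (X - C (((1 + √(c₁ ^ 2 + c₂ ^ 2 + c₃ ^ 2)) / 8 : ℝ) : ℂ)) *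
        (X - C (((1 - √(c₁ ^ 2 + c₂ ^ 2 + c₃ ^ 2)) / 8 : ℝ) : ℂ)) := by
  have hr : ((√(c₁ ^ 2 + c₂ ^ 2 + c₃ ^ 2) : ℝ) : ℂ) ^ 2 =
      (c₁ : ℂ) ^ 2 + ((-(paritySign o * c₂) : ℝ) : ℂ) ^ 2 + ((paritySign o * c₃ : ℝ) : ℂ) ^ 2 := by
    norm_cast
    rw [Real.sq_sqrt (by positivity)]
    linear_combination (c₂ ^ 2 + c₃ ^ 2) * (paritySign_sq o).symm
  rw [pauliCubeBlock, charpoly_blochMatrix _ _ _ _ _ hr]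
  congr 3 <;> push_cast <;> ring

lemma charpoly_pauliCubeState (c₁ c₂ c₃ : ℝ) :
    (pauliCubeState c₁ c₂ c₃).charpoly =
      (X - C (((1 + √(c₁ ^ 2 + c₂ ^ 2 + c₃ ^ 2)) / 8 : ℝ) : ℂ)) ^ 4 *
        (X - C (((1 - √(c₁ ^ 2 + c₂ ^ 2 + c₃ ^ 2)) / 8 : ℝ) : ℂ)) ^ 4 := by
  rw [← charpoly_reindex complementPairEquiv, reindex_pauliCubeState, charpoly_blockDiagonal,
    Finset.prod_congr rfl fun o _ => charpoly_pauliCubeBlock c₁ c₂ c₃ o, Finset.prod_const,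
    Finset.card_univ, Fintype.card_prod, Fintype.card_fin, mul_pow]

/-- The state `ρ = (1/8)(I₈ + c₁σ₁⊗σ₁⊗σ₁ + c₂σ₂⊗σ₂⊗σ₂ + c₃σ₃⊗σ₃⊗σ₃)` is Hermitian with
characteristic polynomial `(X−(1+r)/8)⁴(X−(1−r)/8)⁴`, `r = √(c₁²+c₂²+c₃²)`. -/
theorem stmt_10 (c₁ c₂ c₃ : ℝ)
    (ρ : Matrix (Fin 2 × Fin 2 × Fin 2) (Fin 2 × Fin 2 × Fin 2) ℂ)
    (hρ : ρ = (1 / 8 : ℂ) • (1 + (c₁ : ℂ) • (pauli1 ⊗ₖ (pauli1 ⊗ₖ pauli1))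
        + (c₂ : ℂ) • (pauli2 ⊗ₖ (pauli2 ⊗ₖ pauli2))
        + (c₃ : ℂ) • (pauli3 ⊗ₖ (pauli3 ⊗ₖ pauli3))))
    (r : ℝ) (hr : r = Real.sqrt (c₁ ^ 2 + c₂ ^ 2 + c₃ ^ 2)) :
    ρ.IsHermitian ∧
    ρ.charpoly = (X - C (((1 + r) / 8 : ℝ) : ℂ)) ^ 4 * (X - C (((1 - r) / 8 : ℝ) : ℂ)) ^ 4 := by
  subst hρ hr
  exact ⟨isHermitian_pauliCubeState c₁ c₂ c₃, charpoly_pauliCubeState c₁ c₂ c₃⟩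
end

section
/- Let N ≥ 2 be a natural number and s, c₃ real numbers. For u = (u₁,…,u_N) ∈ {0,1}^N define f(u) = 1 + s·Σ_{k=1}^{N−1}(−1)^{u_k} + (−1)^{u_N}·|s + (−1)^{u₁+⋯+u_{N−1}}·c₃|. Then (1/2^N)·Σ_{u∈{0,1}^N} f(u)·log₂ f(u) = (1/2^N)·[ Σ_{k≥0, 2k≤N−1} C(N−1,2k)·H_{(N−1−4k)s}(|s+c₃|) + Σ_{k≥0, 2k+1≤N−1} C(N−1,2k+1)·H_{(N−3−4k)s}(|s−c₃|) ], where C(n,j) denotes the binomial coefficient. (This single identity covers the paper's four cases N = 4n, 4n+1, 4n+2, 4n+3.) -/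
open Finset

theorem sum_fun_fin_succ_eq_sum_snoc {n : ℕ} {α M : Type*} [Fintype α] [AddCommMonoid M]
    (g : (Fin (n + 1) → α) → M) :
    ∑ u, g u = ∑ v : Fin n → α, ∑ b : α, g (Fin.snoc v b) := by
  rw [← Fintype.sum_prod_type_right']
  exact ((Fin.snocEquiv fun _ => α).sum_comp g).symm

theorem sum_filter_val_lt_last {n : ℕ} {M : Type*} [AddCommMonoid M] (g : Fin (n + 1) → M) :
    ∑ k ∈ univ.filter (fun k : Fin (n + 1) => (k : ℕ) < n), g k = ∑ i : Fin n, g i.castSucc := by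
  simp [sum_filter, Fin.sum_univ_castSucc]

/-- Identifying `v : ι → Fin 2` with its support turns this into `Finset.sum_powerset_apply_card`. -/
theorem sum_fun_fin_two_apply_sum {ι M : Type*} [Fintype ι] [DecidableEq ι] [AddCommMonoid M]
    (G : ℕ → M) :
    ∑ v : ι → Fin 2, G (∑ i, (v i : ℕ))
      = ∑ m ∈ range (Fintype.card ι + 1), (Fintype.card ι).choose m • G m := by
  rw [← card_univ, ← sum_powerset_apply_card]
  refine sum_nbij' (fun v => univ.filter (v · = 1)) (fun t i => if i ∈ t then 1 else 0)
    (by simp) (by simp) (fun v _ => funext fun i => ?_) (fun t _ => by ext; simp) (fun v _ => ?_)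
  · simp only [mem_filter, mem_univ, true_and]
    generalize v i = b
    fin_cases b <;> simp
  · rw [card_filter]
    refine congrArg G (sum_congr rfl fun i _ => ?_)
    generalize v i = b
    fin_cases b <;> simp

theorem sum_range_succ_eq_sum_even_add_sum_odd {M : Type*} [AddCommMonoid M] (n : ℕ)
    (F : ℕ → M) :
    ∑ m ∈ range (n + 1), F m
      = ∑ k ∈ (range (n + 1)).filter (fun k => 2 * k ≤ n), F (2 * k)
        + ∑ k ∈ (range (n + 1)).filter (fun k => 2 * k + 1 ≤ n), F (2 * k + 1) := by
  rw [← sum_filter_add_sum_filter_not (range (n + 1)) Even]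
  congr 1
  · refine (sum_nbij' (2 * ·) (· / 2) ?_ ?_ ?_ ?_ ?_).symm <;> intro k hk <;>
      simp [Nat.even_iff] at hk ⊢ <;> omega
  · refine (sum_nbij' (2 * · + 1) (· / 2) ?_ ?_ ?_ ?_ ?_).symm <;> intro k hk <;>
      simp [Nat.even_iff] at hk ⊢ <;> omega

theorem neg_one_pow_fin_two_val (b : Fin 2) : (-1 : ℝ) ^ (b : ℕ) = 1 - 2 * (b : ℕ) := by
  fin_cases b <;> norm_num

theorem sum_neg_one_pow_fin_two {n : ℕ} (v : Fin n → Fin 2) :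
    ∑ i, (-1 : ℝ) ^ (v i : ℕ) = n - 2 * ∑ i, (v i : ℕ) := by
  simp [neg_one_pow_fin_two_val, sum_sub_distrib, mul_sum]

theorem sum_fin_two_mul_logb_eq_Hy (y x : ℝ) :
    ∑ b : Fin 2, (1 + y + (-1) ^ (b : ℕ) * x) * Real.logb 2 (1 + y + (-1) ^ (b : ℕ) * x)
      = Hy y x := by
  simp [Fin.sum_univ_two, Hy, sub_eq_add_neg]

/-- For `u ∈ {0,1}^N` let
`f(u) = 1 + s·Σ_{k=1}^{N−1}(−1)^{u_k} + (−1)^{u_N}·|s + (−1)^{u₁+⋯+u_{N−1}}c₃|`. Then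
`(1/2^N)·Σ_u f(u)log₂ f(u)
  = (1/2^N)[Σ_{2k≤N−1} C(N−1,2k)H_{(N−1−4k)s}(|s+c₃|)
     + Σ_{2k+1≤N−1} C(N−1,2k+1)H_{(N−3−4k)s}(|s−c₃|)]`. -/
theorem stmt_13 (N : ℕ) (hN : 2 ≤ N) (s c₃ : ℝ)
    (f : (Fin N → Fin 2) → ℝ)
    (hf : ∀ u, f u = 1
        + s * ∑ k ∈ Finset.univ.filter (fun k : Fin N => (k : ℕ) < N - 1), (-1 : ℝ) ^ (u k : ℕ)
        + (-1 : ℝ) ^ ((u ⟨N - 1, by omega⟩ : Fin 2) : ℕ)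
          * |s + (-1 : ℝ) ^ (∑ k ∈ Finset.univ.filter (fun k : Fin N => (k : ℕ) < N - 1),
              ((u k : Fin 2) : ℕ)) * c₃|) :
    (1 / 2 ^ N : ℝ) * ∑ u : Fin N → Fin 2, f u * Real.logb 2 (f u)
      = (1 / 2 ^ N : ℝ) *
        ((∑ k ∈ (Finset.range N).filter (fun k => 2 * k ≤ N - 1),
            ((N - 1).choose (2 * k) : ℝ) * Hy (((N : ℝ) - 1 - 4 * k) * s) |s + c₃|)
         + ∑ k ∈ (Finset.range N).filter (fun k => 2 * k + 1 ≤ N - 1),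
            ((N - 1).choose (2 * k + 1) : ℝ) * Hy (((N : ℝ) - 3 - 4 * k) * s) |s - c₃|) := by
  obtain ⟨n, rfl⟩ : ∃ n, N = n + 1 := ⟨N - 1, by omega⟩
  have hf_snoc : ∀ (v : Fin n → Fin 2) (b : Fin 2), f (Fin.snoc v b)
      = 1 + ((n : ℝ) - 2 * ∑ i, (v i : ℕ)) * s
        + (-1) ^ (b : ℕ) * |s + (-1) ^ (∑ i, (v i : ℕ)) * c₃| := by
    intro v b
    rw [hf]
    simp only [add_tsub_cancel_right, sum_filter_val_lt_last, Fin.snoc_castSucc,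
      sum_neg_one_pow_fin_two]
    rw [show (⟨n, _⟩ : Fin (n + 1)) = Fin.last n from rfl, Fin.snoc_last]
    ring
  congr 1
  calc ∑ u, f u * Real.logb 2 (f u)
      = ∑ v : Fin n → Fin 2, Hy (((n : ℝ) - 2 * ∑ i, (v i : ℕ)) * s)
          |s + (-1) ^ (∑ i, (v i : ℕ)) * c₃| := by
        simp only [sum_fun_fin_succ_eq_sum_snoc, hf_snoc, sum_fin_two_mul_logb_eq_Hy]
    _ = ∑ m ∈ range (n + 1), (n.choose m : ℝ) * Hy (((n : ℝ) - 2 * m) * s)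
          |s + (-1) ^ m * c₃| := by
        simpa [nsmul_eq_mul] using sum_fun_fin_two_apply_sum (ι := Fin n)
          fun m => Hy (((n : ℝ) - 2 * m) * s) |s + (-1) ^ m * c₃|
    _ = _ := by
        rw [sum_range_succ_eq_sum_even_add_sum_odd, add_tsub_cancel_right]
        congr 1 <;> refine sum_congr rfl fun k _ => ?_
        · rw [pow_mul, neg_one_sq, one_pow, one_mul]
          push_cast
          ring_nf
        · rw [pow_succ, pow_mul, neg_one_sq, one_pow, one_mul, neg_one_mul, ← sub_eq_add_neg]
          push_cast
          ring_nf
end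

section
/- Let s, c₁, c₂, c₃, t, y₁, y₂, y₃ be real numbers with t²+y₁²+y₂²+y₃² = 1, let V = t·I₂ + i(y₁σ₁+y₂σ₂+y₃σ₃), Π₀ = [[1,0],[0,0]], Π₁ = [[0,0],[0,1]], and P_j = V Π_j V† for j ∈ {0,1}. Let ρ = (1/8)·(I₈ + Σ_{i=1}^3 c_i·σ_i⊗σ_i⊗σ_i + s·σ₃⊗I₂⊗I₂ + s·I₂⊗σ₃⊗I₂ + s·I₂⊗I₂⊗σ₃), and set z₁ = 2(−t y₂ + y₁y₃), z₂ = 2(t y₁ + y₂y₃), z₃ = t² + y₃² − y₁² − y₂². Then for j ∈ {0,1}: (P_j⊗I₄)·ρ·(P_j⊗I₄) = (1/8)·P_j ⊗ [ (1+(−1)ʲ s z₃)·I₄ + (−1)ʲ·Σ_{i=1}^3 c_i z_i·σ_i⊗σ_i + s·σ₃⊗I₂ + s·I₂⊗σ₃ ], and the trace of (P_j⊗I₄)·ρ·(P_j⊗I₄) equals (1/2)·(1+(−1)ʲ s z₃). -/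
/-!
Since `Π_j` has rank one, `Π_j B Π_j = B_{jj} Π_j`; conjugating by `V` gives
`P_j A P_j = (V† A V)_{jj} P_j` for every `A`, hence
`(P_j ⊗ I₄)(A ⊗ B)(P_j ⊗ I₄) = (V† A V)_{jj} P_j ⊗ B`. Applied term by term to `ρ`, only the
numbers `(V† V)_{jj} = 1` (this is where `t² + |y|² = 1` enters) and
`(V† σ_i V)_{jj} = (-1)^j z_i` survive: `(-1)^j z` is the Bloch vector of `V|j⟩`, and `z`
is the image of `e₃` under the rotation of `ℝ³` induced by `V`. For the trace, `tr P_j = 1`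
and every Pauli term of the bracket is traceless.
-/

open Kronecker Matrix

/-- `Π₀ = [[1,0],[0,0]]`, `Π₁ = [[0,0],[0,1]]`. -/
def proj (j : Fin 2) : Matrix (Fin 2) (Fin 2) ℂ :=
  Matrix.diagonal fun i => if i = j then 1 else 0

theorem Matrix.conj_sandwich_eq_smul {n R : Type*} [Fintype n] [CommSemiring R]
    (V Q W A : Matrix n n R) (c : R) (hQ : Q * (W * A * V) * Q = c • Q) :
    V * Q * W * A * (V * Q * W) = c • (V * Q * W) := by
  calc V * Q * W * A * (V * Q * W) = V * (Q * (W * A * V) * Q) * W := by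
        simp only [Matrix.mul_assoc]
    _ = c • (V * Q * W) := by rw [hQ, Matrix.mul_smul, Matrix.smul_mul]

theorem Matrix.kronecker_one_mul_kronecker_mul_kronecker_one {n m R : Type*} [Fintype n]
    [Fintype m] [DecidableEq m] [CommSemiring R] (P A : Matrix n n R) (B : Matrix m m R) :
    (P ⊗ₖ (1 : Matrix m m R)) * (A ⊗ₖ B) * (P ⊗ₖ 1) = (P * A * P) ⊗ₖ B := by
  rw [← mul_kronecker_mul, ← mul_kronecker_mul, Matrix.one_mul, Matrix.mul_one]

theorem proj_eq_single (j : Fin 2) : proj j = single j j 1 := by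
  rw [proj, ← diagonal_single]
  congr with i
  exact (Pi.single_apply j 1 i).symm

theorem proj_mul_mul_proj (A : Matrix (Fin 2) (Fin 2) ℂ) (j : Fin 2) :
    proj j * A * proj j = A j j • proj j := by
  rw [proj_eq_single, single_mul_mul_single, smul_single, one_mul, mul_one, smul_eq_mul, mul_one]

theorem trace_proj (j : Fin 2) : (proj j).trace = 1 := by
  rw [proj_eq_single, trace_single_eq_same]

def quaternionMatrix (t y₁ y₂ y₃ : ℝ) : Matrix (Fin 2) (Fin 2) ℂ :=
  (t : ℂ) • 1 + Complex.I • ((y₁ : ℂ) • pauli1 + (y₂ : ℂ) • pauli2 + (y₃ : ℂ) • pauli3)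

section quaternionMatrix

open Complex

variable (t y₁ y₂ y₃ : ℝ)

theorem quaternionMatrix_eq :
    quaternionMatrix t y₁ y₂ y₃
      = !![(t : ℂ) + I * y₃, (y₂ : ℂ) + I * y₁; -(y₂ : ℂ) + I * y₁, (t : ℂ) - I * y₃] := by
  ext i k
  fin_cases i <;> fin_cases k <;>
    simp [quaternionMatrix, pauli1, pauli2, pauli3, one_apply, Complex.ext_iff]

theorem conjTranspose_quaternionMatrix :
    (quaternionMatrix t y₁ y₂ y₃)ᴴ
      = !![(t : ℂ) - I * y₃, -(y₂ : ℂ) - I * y₁; (y₂ : ℂ) - I * y₁, (t : ℂ) + I * y₃] := by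
  rw [quaternionMatrix_eq]
  ext i k
  fin_cases i <;> fin_cases k <;> simp <;> ring

theorem conjTranspose_quaternionMatrix_mul_self (h : t ^ 2 + y₁ ^ 2 + y₂ ^ 2 + y₃ ^ 2 = 1) :
    (quaternionMatrix t y₁ y₂ y₃)ᴴ * quaternionMatrix t y₁ y₂ y₃ = 1 := by
  rw [conjTranspose_quaternionMatrix, quaternionMatrix_eq]
  ext i k
  fin_cases i <;> fin_cases k <;> simp [mul_apply, Complex.ext_iff] <;>
    constructor <;> first | ring1 | linear_combination h

theorem quaternionMatrix_conj_pauli1_apply_self (j : Fin 2) :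
    ((quaternionMatrix t y₁ y₂ y₃)ᴴ * pauli1 * quaternionMatrix t y₁ y₂ y₃) j j
      = (((-1 : ℝ) ^ (j : ℕ) * (2 * (-(t * y₂) + y₁ * y₃)) : ℝ) : ℂ) := by
  rw [conjTranspose_quaternionMatrix, quaternionMatrix_eq]
  fin_cases j <;> simp [pauli1, mul_apply, Complex.ext_iff] <;> constructor <;> ring1

theorem quaternionMatrix_conj_pauli2_apply_self (j : Fin 2) :
    ((quaternionMatrix t y₁ y₂ y₃)ᴴ * pauli2 * quaternionMatrix t y₁ y₂ y₃) j j
      = (((-1 : ℝ) ^ (j : ℕ) * (2 * (t * y₁ + y₂ * y₃)) : ℝ) : ℂ) := by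
  rw [conjTranspose_quaternionMatrix, quaternionMatrix_eq]
  fin_cases j <;> simp [pauli2, mul_apply, Complex.ext_iff] <;> constructor <;> ring1

theorem quaternionMatrix_conj_pauli3_apply_self (j : Fin 2) :
    ((quaternionMatrix t y₁ y₂ y₃)ᴴ * pauli3 * quaternionMatrix t y₁ y₂ y₃) j j
      = (((-1 : ℝ) ^ (j : ℕ) * (t ^ 2 + y₃ ^ 2 - y₁ ^ 2 - y₂ ^ 2)) : ℝ) := by
  rw [conjTranspose_quaternionMatrix, quaternionMatrix_eq]
  fin_cases j <;> simp [pauli3, mul_apply, Complex.ext_iff, pow_two] <;> constructor <;> ring1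

end quaternionMatrix

/-- Effect of the von Neumann measurement `{P_j = V Π_j V†}` on the first qubit of the
three-qubit state `ρ`: both the post-measurement (unnormalized) state and its trace. -/
theorem stmt_14 (s c₁ c₂ c₃ t y₁ y₂ y₃ : ℝ)
    (hunit : t ^ 2 + y₁ ^ 2 + y₂ ^ 2 + y₃ ^ 2 = 1)
    (V : Matrix (Fin 2) (Fin 2) ℂ)
    (hV : V = (t : ℂ) • 1 + Complex.I • ((y₁ : ℂ) • pauli1 + (y₂ : ℂ) • pauli2
        + (y₃ : ℂ) • pauli3))
    (P : Fin 2 → Matrix (Fin 2) (Fin 2) ℂ) (hP : ∀ j, P j = V * proj j * Vᴴ)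
    (ρ : Matrix (Fin 2 × Fin 2 × Fin 2) (Fin 2 × Fin 2 × Fin 2) ℂ)
    (hρ : ρ = (1 / 8 : ℂ) • (1 + (c₁ : ℂ) • (pauli1 ⊗ₖ (pauli1 ⊗ₖ pauli1))
        + (c₂ : ℂ) • (pauli2 ⊗ₖ (pauli2 ⊗ₖ pauli2))
        + (c₃ : ℂ) • (pauli3 ⊗ₖ (pauli3 ⊗ₖ pauli3))
        + (s : ℂ) • (pauli3 ⊗ₖ ((1 : Matrix (Fin 2) (Fin 2) ℂ) ⊗ₖ (1 : Matrix (Fin 2) (Fin 2) ℂ)))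
        + (s : ℂ) • ((1 : Matrix (Fin 2) (Fin 2) ℂ) ⊗ₖ (pauli3 ⊗ₖ (1 : Matrix (Fin 2) (Fin 2) ℂ)))
        + (s : ℂ) • ((1 : Matrix (Fin 2) (Fin 2) ℂ) ⊗ₖ ((1 : Matrix (Fin 2) (Fin 2) ℂ) ⊗ₖ pauli3))))
    (z₁ z₂ z₃ : ℝ)
    (hz₁ : z₁ = 2 * (-(t * y₂) + y₁ * y₃))
    (hz₂ : z₂ = 2 * (t * y₁ + y₂ * y₃))
    (hz₃ : z₃ = t ^ 2 + y₃ ^ 2 - y₁ ^ 2 - y₂ ^ 2) :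
    ∀ j : Fin 2,
      (P j ⊗ₖ (1 : Matrix (Fin 2 × Fin 2) (Fin 2 × Fin 2) ℂ)) * ρ
          * (P j ⊗ₖ (1 : Matrix (Fin 2 × Fin 2) (Fin 2 × Fin 2) ℂ))
        = (1 / 8 : ℂ) • (P j ⊗ₖ
            (((1 + (-1 : ℝ) ^ (j : ℕ) * s * z₃ : ℝ) : ℂ) • (1 : Matrix (Fin 2 × Fin 2) (Fin 2 × Fin 2) ℂ)
              + (((-1 : ℝ) ^ (j : ℕ) * (c₁ * z₁) : ℝ) : ℂ) • (pauli1 ⊗ₖ pauli1)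
              + (((-1 : ℝ) ^ (j : ℕ) * (c₂ * z₂) : ℝ) : ℂ) • (pauli2 ⊗ₖ pauli2)
              + (((-1 : ℝ) ^ (j : ℕ) * (c₃ * z₃) : ℝ) : ℂ) • (pauli3 ⊗ₖ pauli3)
              + (s : ℂ) • (pauli3 ⊗ₖ (1 : Matrix (Fin 2) (Fin 2) ℂ))
              + (s : ℂ) • ((1 : Matrix (Fin 2) (Fin 2) ℂ) ⊗ₖ pauli3))) ∧
      Matrix.trace ((P j ⊗ₖ (1 : Matrix (Fin 2 × Fin 2) (Fin 2 × Fin 2) ℂ)) * ρ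
          * (P j ⊗ₖ (1 : Matrix (Fin 2 × Fin 2) (Fin 2 × Fin 2) ℂ)))
        = (((1 / 2) * (1 + (-1 : ℝ) ^ (j : ℕ) * s * z₃) : ℝ) : ℂ) := by
  intro j
  have hVV : Vᴴ * V = 1 := by
    rw [hV]
    exact conjTranspose_quaternionMatrix_mul_self t y₁ y₂ y₃ hunit
  have hsandwich (A : Matrix (Fin 2) (Fin 2) ℂ) : P j * A * P j = (Vᴴ * A * V) j j • P j := by
    rw [hP j]
    exact conj_sandwich_eq_smul _ _ _ _ _ (proj_mul_mul_proj _ j)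
  have hone : (Vᴴ * (1 : Matrix (Fin 2) (Fin 2) ℂ) * V) j j = 1 := by
    rw [Matrix.mul_one, hVV, one_apply_eq]
  have hσ₁ : (Vᴴ * pauli1 * V) j j = (((-1 : ℝ) ^ (j : ℕ) * z₁ : ℝ) : ℂ) := by
    rw [hV, hz₁]; exact quaternionMatrix_conj_pauli1_apply_self t y₁ y₂ y₃ j
  have hσ₂ : (Vᴴ * pauli2 * V) j j = (((-1 : ℝ) ^ (j : ℕ) * z₂ : ℝ) : ℂ) := by
    rw [hV, hz₂]; exact quaternionMatrix_conj_pauli2_apply_self t y₁ y₂ y₃ j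
  have hσ₃ : (Vᴴ * pauli3 * V) j j = (((-1 : ℝ) ^ (j : ℕ) * z₃ : ℝ) : ℂ) := by
    rw [hV, hz₃]; exact quaternionMatrix_conj_pauli3_apply_self t y₁ y₂ y₃ j
  refine (fun hstate => ⟨hstate, ?trace⟩) ?state
  case state =>
    have hI : (1 : Matrix (Fin 2 × Fin 2 × Fin 2) (Fin 2 × Fin 2 × Fin 2) ℂ) = 1 ⊗ₖ (1 ⊗ₖ 1) := by
      rw [one_kronecker_one, one_kronecker_one]
    rw [hρ, hI]
    simp only [Matrix.mul_smul, Matrix.smul_mul, Matrix.mul_add, Matrix.add_mul,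
      kronecker_one_mul_kronecker_mul_kronecker_one, hsandwich, hone, hσ₁, hσ₂, hσ₃,
      smul_kronecker, kronecker_smul, kronecker_add, one_smul]
    rw [one_kronecker_one]
    push_cast
    module
  case trace =>
    have htr : (P j).trace = 1 := by rw [hP j, trace_mul_cycle, hVV, Matrix.one_mul, trace_proj]
    rw [hstate]
    simp only [trace_smul, trace_kronecker, htr, trace_add, trace_one, smul_eq_mul]
    simp [pauli1, pauli2, pauli3, trace_fin_two]
    ring
end

section
/- Let N ≥ 2 be a natural number and μ a real number. For u = (u₁,…,u_{N−1}) ∈ {0,1}^{N−1} define ᾱ(u) = μ·Σ_{t=1}^{⌊(N−1)/2⌋} Σ_{S⊆{1,…,N−1}, |S|=2t} ∏_{i∈S}(−1)^{u_i} and δ̄(u) = μ·Σ_{t=0}^{⌊(N−2)/2⌋} Σ_{S⊆{1,…,N−1}, |S|=2t+1} ∏_{i∈S}(−1)^{u_i}. Then (1/2^N)·Σ_{u∈{0,1}^{N−1}} H_{ᾱ(u)}(δ̄(u)) = ((2^{N−1}−1)/2^{N−1})·(1−μ)·log₂(1−μ) + (1/2^{N−1})·(1+(2^{N−1}−1)μ)·log₂(1+(2^{N−1}−1)μ).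 -/
/-!
Write `s_i = (-1)^{u_i}`. Grouping the subset sums by parity of `|S|` gives
`1 + ᾱ(u) ± δ̄(u) = 1 - μ + μ ∏ (1 ± s_i)`, and `∏ (1 + s_i)` (resp. `∏ (1 - s_i)`) equals
`2^{N-1}` at `u = 0` (resp. `u = 1`) and vanishes elsewhere. So each of the two entropy terms of
`H` is evaluated at `1 + (2^{N-1} - 1) μ` for one `u` and at `1 - μ` for the other `2^{N-1} - 1`.
-/

open Finset

lemma sum_range_succ_eq_add_sum_even_add_sum_odd {M : Type*} [AddCommMonoid M] (c : ℕ → M)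
    {n : ℕ} (hn : 1 ≤ n) :
    ∑ k ∈ range (n + 1), c k
      = c 0 + ∑ t ∈ Icc 1 (n / 2), c (2 * t) + ∑ t ∈ range ((n - 1) / 2 + 1), c (2 * t + 1) := by
  induction n, hn using Nat.le_induction with
  | base => simp [sum_range_succ]
  | succ n hn ih =>
    rw [sum_range_succ, ih]
    rcases Nat.even_or_odd (n + 1) with hev | hodd
    · rw [show (n + 1) / 2 = n / 2 + 1 by grind, show n + 1 - 1 = n - 1 + 1 by omega,
        sum_Icc_succ_top (by omega), show 2 * (n / 2 + 1) = n + 1 by grind,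
        show (n - 1 + 1) / 2 = (n - 1) / 2 by grind]
      abel
    · rw [show (n + 1) / 2 = n / 2 by grind,
        show (n + 1 - 1) / 2 + 1 = (n - 1) / 2 + 1 + 1 by grind, sum_range_succ _ ((n - 1) / 2 + 1),
        show 2 * ((n - 1) / 2 + 1) + 1 = n + 1 by grind]
      abel

lemma sum_range_sum_powersetCard_prod {ι R : Type*} [Fintype ι] [CommSemiring R] (f : ι → R) :
    ∑ k ∈ range (Fintype.card ι + 1), ∑ S ∈ powersetCard k univ, ∏ i ∈ S, f i
      = ∏ i, (1 + f i) := by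
  classical
  rw [prod_one_add, powerset_card_biUnion,
    sum_biUnion ((pairwise_disjoint_powersetCard _).set_pairwise _), card_univ]

lemma sum_powersetCard_prod_neg {ι R : Type*} [CommRing R] (f : ι → R) (s : Finset ι) (k : ℕ) :
    ∑ S ∈ powersetCard k s, ∏ i ∈ S, -f i = (-1) ^ k * ∑ S ∈ powersetCard k s, ∏ i ∈ S, f i := by
  rw [mul_sum]
  exact sum_congr rfl fun S hS => by rw [prod_neg, (mem_powersetCard.1 hS).2]

section
variable {R : Type*} [CommRing R] {n : ℕ}

lemma sum_even_add_sum_odd_powersetCard_prod (hn : 1 ≤ n) (f : Fin n → R) :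
    ∑ t ∈ Icc 1 (n / 2), ∑ S ∈ powersetCard (2 * t) univ, ∏ i ∈ S, f i
      + ∑ t ∈ range ((n - 1) / 2 + 1), ∑ S ∈ powersetCard (2 * t + 1) univ, ∏ i ∈ S, f i
    = ∏ i, (1 + f i) - 1 := by
  rw [← sum_range_sum_powersetCard_prod, Fintype.card_fin,
    sum_range_succ_eq_add_sum_even_add_sum_odd _ hn]
  simp only [powersetCard_zero, sum_singleton, prod_empty]
  abel

lemma sum_even_sub_sum_odd_powersetCard_prod (hn : 1 ≤ n) (f : Fin n → R) :
    ∑ t ∈ Icc 1 (n / 2), ∑ S ∈ powersetCard (2 * t) univ, ∏ i ∈ S, f i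
      - ∑ t ∈ range ((n - 1) / 2 + 1), ∑ S ∈ powersetCard (2 * t + 1) univ, ∏ i ∈ S, f i
    = ∏ i, (1 - f i) - 1 := by
  simpa [sum_powersetCard_prod_neg, pow_succ, pow_mul, sub_eq_add_neg] using
    sum_even_add_sum_odd_powersetCard_prod hn (fun i => -f i)

end

section
variable {ι R : Type*} [Fintype ι] [CommRing R]

lemma prod_one_add_neg_one_pow (u : ι → Fin 2) :
    ∏ i, (1 + (-1 : R) ^ (u i : ℕ)) = if u = 0 then 2 ^ Fintype.card ι else 0 := by
  have h (a : Fin 2) : 1 + (-1 : R) ^ (a : ℕ) = if a = 0 then 2 else 0 := by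
    fin_cases a <;> norm_num
  simp only [h, Fintype.prod_ite_zero, prod_const, card_univ, funext_iff, Pi.zero_apply]

lemma prod_one_sub_neg_one_pow (u : ι → Fin 2) :
    ∏ i, (1 - (-1 : R) ^ (u i : ℕ)) = if u = 1 then 2 ^ Fintype.card ι else 0 := by
  have h (a : Fin 2) : 1 - (-1 : R) ^ (a : ℕ) = if a = 1 then 2 else 0 := by
    fin_cases a <;> norm_num
  simp only [h, Fintype.prod_ite_zero, prod_const, card_univ, funext_iff, Pi.one_apply]

end

lemma sum_comp_ite_eq {ι α M : Type*} [Fintype ι] [DecidableEq ι] [AddCommMonoid M]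
    (g : α → M) (c : ι) (a b : α) :
    ∑ u, g (if u = c then a else b) = g a + (Fintype.card ι - 1) • g b := by
  rw [Fintype.sum_eq_add_sum_compl c, if_pos rfl,
    sum_congr rfl fun u hu => by rw [if_neg (by simpa using hu)], sum_const, card_compl,
    card_singleton]

lemma sum_Hy_eq {n : ℕ} (hn : 1 ≤ n) (μ : ℝ) (α δ : (Fin n → Fin 2) → ℝ)
    (hα : ∀ u, α u = μ * ∑ t ∈ Icc 1 (n / 2),
        ∑ S ∈ powersetCard (2 * t) univ, ∏ i ∈ S, (-1 : ℝ) ^ (u i : ℕ))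
    (hδ : ∀ u, δ u = μ * ∑ t ∈ range ((n - 1) / 2 + 1),
        ∑ S ∈ powersetCard (2 * t + 1) univ, ∏ i ∈ S, (-1 : ℝ) ^ (u i : ℕ)) :
    ∑ u, Hy (α u) (δ u) = 2 * ((1 + (2 ^ n - 1) * μ) * Real.logb 2 (1 + (2 ^ n - 1) * μ)
      + (2 ^ n - 1) * ((1 - μ) * Real.logb 2 (1 - μ))) := by
  set A : ℝ := 1 + (2 ^ n - 1) * μ
  have hplus (u : Fin n → Fin 2) : 1 + α u + δ u = if u = 0 then A else 1 - μ := by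
    have h := sum_even_add_sum_odd_powersetCard_prod hn fun i => (-1 : ℝ) ^ (u i : ℕ)
    rw [prod_one_add_neg_one_pow, Fintype.card_fin] at h
    rw [hα, hδ]
    split_ifs at h ⊢ <;> linear_combination μ * h
  have hminus (u : Fin n → Fin 2) : 1 + α u - δ u = if u = 1 then A else 1 - μ := by
    have h := sum_even_sub_sum_odd_powersetCard_prod hn fun i => (-1 : ℝ) ^ (u i : ℕ)
    rw [prod_one_sub_neg_one_pow, Fintype.card_fin] at h
    rw [hα, hδ]
    split_ifs at h ⊢ <;> linear_combination μ * h
  let φ : ℝ → ℝ := fun t => t * Real.logb 2 t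
  have hH (u : Fin n → Fin 2) :
      Hy (α u) (δ u) = φ (if u = 0 then A else 1 - μ) + φ (if u = 1 then A else 1 - μ) := by
    rw [← hplus, ← hminus]; rfl
  rw [sum_congr rfl fun u _ => hH u, sum_add_distrib, sum_comp_ite_eq, sum_comp_ite_eq,
    Fintype.card_fun, Fintype.card_fin, Fintype.card_fin, nsmul_eq_mul,
    Nat.cast_sub Nat.one_le_two_pow]
  push_cast
  ring

/-- With `ᾱ(u) = μ·Σ_{t=1}^{⌊(N−1)/2⌋} Σ_{|S|=2t} ∏_{i∈S}(−1)^{u_i}` and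
`δ̄(u) = μ·Σ_{t=0}^{⌊(N−2)/2⌋} Σ_{|S|=2t+1} ∏_{i∈S}(−1)^{u_i}` over subsets of `{1,…,N−1}`,
one has `(1/2^N)·Σ_{u∈{0,1}^{N−1}} H_{ᾱ(u)}(δ̄(u))
  = ((2^{N−1}−1)/2^{N−1})(1−μ)log₂(1−μ) + (1/2^{N−1})(1+(2^{N−1}−1)μ)log₂(1+(2^{N−1}−1)μ)`. -/
theorem stmt_18 (N : ℕ) (hN : 2 ≤ N) (μ : ℝ)
    (α δ : (Fin (N - 1) → Fin 2) → ℝ)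
    (hα : ∀ u, α u = μ * ∑ t ∈ Finset.Icc 1 ((N - 1) / 2),
        ∑ S ∈ Finset.powersetCard (2 * t) (Finset.univ : Finset (Fin (N - 1))),
          ∏ i ∈ S, (-1 : ℝ) ^ ((u i : Fin 2) : ℕ))
    (hδ : ∀ u, δ u = μ * ∑ t ∈ Finset.range ((N - 2) / 2 + 1),
        ∑ S ∈ Finset.powersetCard (2 * t + 1) (Finset.univ : Finset (Fin (N - 1))),
          ∏ i ∈ S, (-1 : ℝ) ^ ((u i : Fin 2) : ℕ)) :
    (1 / 2 ^ N : ℝ) * ∑ u : Fin (N - 1) → Fin 2, Hy (α u) (δ u)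
      = ((2 ^ (N - 1) - 1) / 2 ^ (N - 1) : ℝ) * (1 - μ) * Real.logb 2 (1 - μ)
        + (1 / 2 ^ (N - 1) : ℝ) * (1 + (2 ^ (N - 1) - 1) * μ)
          * Real.logb 2 (1 + (2 ^ (N - 1) - 1) * μ) := by
  have h2N : (2 : ℝ) ^ N = 2 * 2 ^ (N - 1) := by rw [← pow_succ']; congr 1; omega
  rw [show N - 2 = N - 1 - 1 by omega] at hδ
  rw [sum_Hy_eq (by omega) μ α δ hα hδ, h2N]
  field_simp
  ring
end
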